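/- arXiv:1403.6444 — 2 statements merged into one kernel-verified Lean document; each statement's English description precedes it below -/
import Mathlib

section
/- Work in R = ℂ[x₀, x₁, x₂, x₃] and let c₀, c₁, λ ∈ ℂ. Define the antisymmetric matrix π with π₀₁ = 0, π₀₂ = c₀x₀x₂, π₀₃ = −c₀x₀x₃, π₁₂ = −c₁x₁x₂, π₁₃ = c₁x₁x₃, π₂₃ = (c₀ − c₁)(x₀² + λx₀x₁ + x₁² + x₂x₃) (and π j i = −π i j). Then the bracket {f, g} = Σ_{i,j} π i j · ∂ᵢf · ∂ⱼg satisfies the Jacobi identity, and π is unimodular: Σ_j ∂ⱼ(π i j) = 0 for every i. -/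
/-! For an antisymmetric `π` the Jacobiator `J f g h` of the bracket is invariant under cyclic
permutations and is a derivation in its first argument (in the Leibniz expansion of
`J (f₁ * f₂) g h` the cross terms cancel in pairs, e.g. `{g,f₁}{h,f₂} + {h,f₂}{f₁,g} = 0`), hence
a derivation in each argument. So `J` vanishes as soon as it vanishes on triples of coordinates,
where `J (X i) (X j) (X k)` is the Schouten expression `Σₗ (πᵢₗ ∂ₗπⱼₖ + πⱼₗ ∂ₗπₖᵢ + πₖₗ ∂ₗπᵢⱼ)`;
for the normal form this, and unimodularity, is a finite polynomial computation. -/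

open MvPolynomial

noncomputable section

/-- The bracket `{f,g} = Σ_{i,j} π i j · ∂ᵢf · ∂ⱼg` determined by a matrix of polynomials. -/
def brkt (π : Fin 4 → Fin 4 → MvPolynomial (Fin 4) ℂ)
    (f g : MvPolynomial (Fin 4) ℂ) : MvPolynomial (Fin 4) ℂ :=
  ∑ i : Fin 4, ∑ j : Fin 4, π i j * pderiv i f * pderiv j g

namespace MvPolynomial

variable {σ R : Type*} [Fintype σ] [CommRing R] (π : σ → σ → MvPolynomial σ R)

def bivectorBracket (f g : MvPolynomial σ R) : MvPolynomial σ R :=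
  ∑ i, ∑ j, π i j * pderiv i f * pderiv j g

def jacobiator (f g h : MvPolynomial σ R) : MvPolynomial σ R :=
  bivectorBracket π f (bivectorBracket π g h) + bivectorBracket π g (bivectorBracket π h f) +
    bivectorBracket π h (bivectorBracket π f g)

theorem bivectorBracket_add_left (f₁ f₂ g : MvPolynomial σ R) :
    bivectorBracket π (f₁ + f₂) g = bivectorBracket π f₁ g + bivectorBracket π f₂ g := by
  simp only [bivectorBracket, map_add, mul_add, add_mul, Finset.sum_add_distrib]

theorem bivectorBracket_add_right (f g₁ g₂ : MvPolynomial σ R) :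
    bivectorBracket π f (g₁ + g₂) = bivectorBracket π f g₁ + bivectorBracket π f g₂ := by
  simp only [bivectorBracket, map_add, mul_add, Finset.sum_add_distrib]

theorem bivectorBracket_mul_left (f₁ f₂ g : MvPolynomial σ R) :
    bivectorBracket π (f₁ * f₂) g =
      f₁ * bivectorBracket π f₂ g + f₂ * bivectorBracket π f₁ g := by
  simp only [bivectorBracket, pderiv_mul, Finset.mul_sum, ← Finset.sum_add_distrib]
  refine Finset.sum_congr rfl fun i _ => Finset.sum_congr rfl fun j _ => ?_
  ring

theorem bivectorBracket_mul_right (f g₁ g₂ : MvPolynomial σ R) :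
    bivectorBracket π f (g₁ * g₂) =
      g₁ * bivectorBracket π f g₂ + g₂ * bivectorBracket π f g₁ := by
  simp only [bivectorBracket, pderiv_mul, Finset.mul_sum, ← Finset.sum_add_distrib]
  refine Finset.sum_congr rfl fun i _ => Finset.sum_congr rfl fun j _ => ?_
  ring

@[simp]
theorem bivectorBracket_C_left (a : R) (g : MvPolynomial σ R) :
    bivectorBracket π (C a) g = 0 := by
  simp [bivectorBracket]

@[simp]
theorem bivectorBracket_C_right (f : MvPolynomial σ R) (a : R) :
    bivectorBracket π f (C a) = 0 := by
  simp [bivectorBracket]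

@[simp]
theorem bivectorBracket_zero_right (f : MvPolynomial σ R) :
    bivectorBracket π f 0 = 0 := by
  simp [bivectorBracket]

theorem bivectorBracket_X_left [DecidableEq σ] (i : σ) (g : MvPolynomial σ R) :
    bivectorBracket π (X i) g = ∑ j, π i j * pderiv j g := by
  simp [bivectorBracket, pderiv_X, Pi.single_apply]

theorem bivectorBracket_X_X [DecidableEq σ] (i j : σ) :
    bivectorBracket π (X i) (X j) = π i j := by
  simp [bivectorBracket_X_left, pderiv_X, Pi.single_apply]

variable {π}

theorem bivectorBracket_swap (hπ : ∀ i j, π j i = -π i j) (f g : MvPolynomial σ R) :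
    bivectorBracket π g f = -bivectorBracket π f g := by
  rw [bivectorBracket, Finset.sum_comm, bivectorBracket, ← Finset.sum_neg_distrib]
  refine Finset.sum_congr rfl fun i _ => ?_
  rw [← Finset.sum_neg_distrib]
  refine Finset.sum_congr rfl fun j _ => ?_
  rw [hπ]; ring

theorem jacobiator_mul_left (hπ : ∀ i j, π j i = -π i j) (f₁ f₂ g h : MvPolynomial σ R) :
    jacobiator π (f₁ * f₂) g h = f₁ * jacobiator π f₂ g h + f₂ * jacobiator π f₁ g h := by
  have swap := bivectorBracket_swap hπ
  simp only [jacobiator, bivectorBracket_mul_left, bivectorBracket_mul_right,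
    bivectorBracket_add_right]
  rw [swap g f₁, swap g f₂]
  ring

theorem jacobiator_add_left (f₁ f₂ g h : MvPolynomial σ R) :
    jacobiator π (f₁ + f₂) g h = jacobiator π f₁ g h + jacobiator π f₂ g h := by
  simp only [jacobiator, bivectorBracket_add_left, bivectorBracket_add_right]
  ring

theorem jacobiator_rotate (f g h : MvPolynomial σ R) :
    jacobiator π g h f = jacobiator π f g h := by
  rw [jacobiator, jacobiator]; ring

theorem jacobiator_eq_zero_of_X_left (hπ : ∀ i j, π j i = -π i j) {g h : MvPolynomial σ R}
    (hX : ∀ i, jacobiator π (X i) g h = 0) (f : MvPolynomial σ R) :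
    jacobiator π f g h = 0 := by
  induction f using MvPolynomial.induction_on with
  | C a => simp [jacobiator]
  | add p q hp hq => rw [jacobiator_add_left, hp, hq, add_zero]
  | mul_X p i hp => rw [jacobiator_mul_left hπ, hp, hX, mul_zero, mul_zero, add_zero]

theorem jacobiator_eq_zero_of_X (hπ : ∀ i j, π j i = -π i j)
    (hX : ∀ i j k, jacobiator π (X i) (X j) (X k) = 0) (f g h : MvPolynomial σ R) :
    jacobiator π f g h = 0 := by
  refine jacobiator_eq_zero_of_X_left hπ (fun i => ?_) f
  rw [← jacobiator_rotate]
  refine jacobiator_eq_zero_of_X_left hπ (fun j => ?_) g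
  rw [← jacobiator_rotate]
  exact jacobiator_eq_zero_of_X_left hπ (fun k => hX k i j) h

theorem jacobiator_X_X_X [DecidableEq σ] (i j k : σ) :
    jacobiator π (X i) (X j) (X k) =
      ∑ l, (π i l * pderiv l (π j k) + π j l * pderiv l (π k i) + π k l * pderiv l (π i j)) := by
  simp only [jacobiator, bivectorBracket_X_X, bivectorBracket_X_left π _ (π _ _),
    ← Finset.sum_add_distrib]

end MvPolynomial

def l112Poisson (c₀ c₁ lam : ℂ) : Fin 4 → Fin 4 → MvPolynomial (Fin 4) ℂ :=
  let p₀₂ := C c₀ * (X 0 * X 2)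
  let p₀₃ := -(C c₀ * (X 0 * X 3))
  let p₁₂ := -(C c₁ * (X 1 * X 2))
  let p₁₃ := C c₁ * (X 1 * X 3)
  let p₂₃ := C (c₀ - c₁) * (X 0 ^ 2 + C lam * X 0 * X 1 + X 1 ^ 2 + X 2 * X 3)
  !![0, 0, p₀₂, p₀₃; 0, 0, p₁₂, p₁₃; -p₀₂, -p₁₂, 0, p₂₃; -p₀₃, -p₁₃, -p₂₃, 0]

theorem l112Poisson_swap (c₀ c₁ lam : ℂ) (i j : Fin 4) :
    l112Poisson c₀ c₁ lam j i = -l112Poisson c₀ c₁ lam i j := by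
  fin_cases i <;> fin_cases j <;> simp [l112Poisson]

theorem l112Poisson_jacobiator_X_X_X (c₀ c₁ lam : ℂ) (i j k : Fin 4) :
    jacobiator (l112Poisson c₀ c₁ lam) (X i) (X j) (X k) = 0 := by
  rw [jacobiator_X_X_X]
  fin_cases i <;> fin_cases j <;> fin_cases k <;>
    simp [l112Poisson, Fin.sum_univ_four, pderiv_X, Pi.single_apply] <;> ring

theorem l112Poisson_unimodular (c₀ c₁ lam : ℂ) (i : Fin 4) :
    ∑ j, pderiv j (l112Poisson c₀ c₁ lam i j) = 0 := by
  fin_cases i <;> simp [l112Poisson, Fin.sum_univ_four] <;> ring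

/-- The normal form of the Poisson structures in the component `L(1,1,2)` satisfies the
Jacobi identity and is unimodular. -/
theorem stmt_11 (c₀ c₁ lam : ℂ)
    (π : Fin 4 → Fin 4 → MvPolynomial (Fin 4) ℂ)
    (hskew : ∀ i j, π j i = - π i j)
    (h01 : π 0 1 = 0)
    (h02 : π 0 2 = C c₀ * (X 0 * X 2))
    (h03 : π 0 3 = - (C c₀ * (X 0 * X 3)))
    (h12 : π 1 2 = - (C c₁ * (X 1 * X 2)))
    (h13 : π 1 3 = C c₁ * (X 1 * X 3))
    (h23 : π 2 3 = C (c₀ - c₁) * (X 0 ^ 2 + C lam * X 0 * X 1 + X 1 ^ 2 + X 2 * X 3)) :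
    (∀ f g h : MvPolynomial (Fin 4) ℂ,
      brkt π f (brkt π g h) + brkt π g (brkt π h f) + brkt π h (brkt π f g) = 0) ∧
    (∀ i : Fin 4, ∑ j : Fin 4, pderiv j (π i j) = 0) := by
  have hdiag (i : Fin 4) : π i i = 0 := CharZero.eq_neg_self_iff.mp (hskew i i)
  have hπ : π = l112Poisson c₀ c₁ lam := by
    funext i j
    fin_cases i <;> fin_cases j <;>
      simp [l112Poisson, hdiag, h01, h02, h03, h12, h13, h23, hskew 0, hskew 1, hskew 2]
  subst hπ
  exact ⟨jacobiator_eq_zero_of_X (l112Poisson_swap c₀ c₁ lam)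
    (l112Poisson_jacobiator_X_X_X c₀ c₁ lam), l112Poisson_unimodular c₀ c₁ lam⟩

end
end

section
/- Work in R = ℂ[x₀, x₁, x₂, x₃]. Let bᵢ, cᵢ, dᵢ ∈ ℂ for i ∈ {1, 2, 3} satisfy bᵢ + c_{i−1} = −2 for all i (indices taken modulo 3 in {1,2,3}, so b₁ + c₃ = b₂ + c₁ = b₃ + c₂ = −2). Define the antisymmetric matrix π with π₀₁ = x₁² + x₁(b₁x₂ + c₁x₃) + d₁x₂x₃, π₀₂ = x₂² + x₂(b₂x₃ + c₂x₁) + d₂x₃x₁, π₀₃ = x₃² + x₃(b₃x₁ + c₃x₂) + d₃x₁x₂, and π i j = 0 for i, j ∈ {1, 2, 3} (and π j i = −π i j). Then the bracket {f, g} = Σ_{i,j} π i j · ∂ᵢf · ∂ⱼg satisfies the Jacobi identity, and π is unimodular: Σ_j ∂ⱼ(π i j) = 0 for every i. -/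
/-!
The bivector `π` is `∂₀ ∧ V` for the vector field `V = Σⱼ π₀ⱼ ∂ⱼ`, so
`{f, g} = ∂₀f · Vg - ∂₀g · Vf`. The coefficients of `V` do not involve `x₀`, hence `∂₀` and `V`
commute, and the wedge of two commuting derivations always satisfies the Jacobi identity.
Unimodularity of row `0` is `div V = 0`, which is exactly where `bᵢ + c_{i-1} = -2` enters;
the other rows reduce to `-∂₀ π₀ᵢ = 0`.
-/

open MvPolynomial

noncomputable section

namespace Derivation

variable {R A : Type*} [CommRing R] [CommRing A] [Algebra R A]

def wedgeBracket (D₁ D₂ : Derivation R A A) (f g : A) : A :=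
  D₁ f * D₂ g - D₁ g * D₂ f

theorem wedgeBracket_jacobi {D₁ D₂ : Derivation R A A} (h : ⁅D₁, D₂⁆ = 0) (f g k : A) :
    wedgeBracket D₁ D₂ f (wedgeBracket D₁ D₂ g k) + wedgeBracket D₁ D₂ g (wedgeBracket D₁ D₂ k f)
      + wedgeBracket D₁ D₂ k (wedgeBracket D₁ D₂ f g) = 0 := by
  have hcomm (a : A) : D₂ (D₁ a) = D₁ (D₂ a) := by
    have := congr_fun h a
    rwa [commutator_apply, zero_apply, sub_eq_zero, eq_comm] at this
  simp only [wedgeBracket, map_sub, leibniz, smul_eq_mul, hcomm]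
  ring

end Derivation

namespace MvPolynomial

variable {σ R : Type*} [Fintype σ] [CommRing R]

def vectorField (a : σ → MvPolynomial σ R) : Derivation R (MvPolynomial σ R) (MvPolynomial σ R) :=
  ∑ j, a j • pderiv j

theorem vectorField_apply (a : σ → MvPolynomial σ R) (f : MvPolynomial σ R) :
    vectorField a f = ∑ j, a j * pderiv j f := by
  rw [vectorField, ← Derivation.coeFnAddMonoidHom_apply, map_sum, Finset.sum_apply]
  rfl

theorem commutator_pderiv_vectorField [DecidableEq σ] {i : σ} {a : σ → MvPolynomial σ R}
    (ha : ∀ j, pderiv i (a j) = 0) : ⁅pderiv (R := R) i, vectorField a⁆ = 0 := by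
  refine derivation_ext fun k => ?_
  rw [Derivation.commutator_apply, vectorField_apply, vectorField_apply]
  simp only [pderiv_X, Pi.single_apply]
  split_ifs <;> simp [ha]

end MvPolynomial

open Derivation

theorem brkt_eq_wedgeBracket {π : Fin 4 → Fin 4 → MvPolynomial (Fin 4) ℂ}
    (hskew : ∀ i j, π j i = - π i j) (h12 : π 1 2 = 0) (h13 : π 1 3 = 0) (h23 : π 2 3 = 0)
    (f g : MvPolynomial (Fin 4) ℂ) :
    brkt π f g = wedgeBracket (pderiv 0) (vectorField (π 0)) f g := by
  have hdiag (i : Fin 4) : π i i = 0 := self_eq_neg.mp (hskew i i)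
  simp only [brkt, wedgeBracket, vectorField_apply, Fin.sum_univ_four, hdiag, hskew 0, hskew 1 2,
    hskew 1 3, hskew 2 3, h12, h13, h23]
  ring

/-- The normal form of the generic Poisson structures in the component `S(2,3)` satisfies
the Jacobi identity and is unimodular, provided `bᵢ + c_{i-1} = -2` (indices mod 3). -/
theorem stmt_17 (b₁ b₂ b₃ c₁ c₂ c₃ d₁ d₂ d₃ : ℂ)
    (hbc₁ : b₁ + c₃ = -2) (hbc₂ : b₂ + c₁ = -2) (hbc₃ : b₃ + c₂ = -2)
    (π : Fin 4 → Fin 4 → MvPolynomial (Fin 4) ℂ)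
    (hskew : ∀ i j, π j i = - π i j)
    (h01 : π 0 1 = X 1 ^ 2 + X 1 * (C b₁ * X 2 + C c₁ * X 3) + C d₁ * X 2 * X 3)
    (h02 : π 0 2 = X 2 ^ 2 + X 2 * (C b₂ * X 3 + C c₂ * X 1) + C d₂ * X 3 * X 1)
    (h03 : π 0 3 = X 3 ^ 2 + X 3 * (C b₃ * X 1 + C c₃ * X 2) + C d₃ * X 1 * X 2)
    (h12 : π 1 2 = 0) (h13 : π 1 3 = 0) (h23 : π 2 3 = 0) :
    (∀ f g h : MvPolynomial (Fin 4) ℂ,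
      brkt π f (brkt π g h) + brkt π g (brkt π h f) + brkt π h (brkt π f g) = 0) ∧
    (∀ i : Fin 4, ∑ j : Fin 4, pderiv j (π i j) = 0) := by
  have hdiag (i : Fin 4) : π i i = 0 := self_eq_neg.mp (hskew i i)
  have hx₀ (j : Fin 4) : pderiv 0 (π 0 j) = 0 := by
    fin_cases j <;> simp [hdiag, h01, h02, h03, pderiv_X]
  refine ⟨fun f g h => ?_, fun i => ?_⟩
  · simp only [brkt_eq_wedgeBracket hskew h12 h13 h23]
    exact wedgeBracket_jacobi (commutator_pderiv_vectorField hx₀) f g h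
  · have hC {a b : ℂ} (h : a + b = -2) : (C a + C b : MvPolynomial (Fin 4) ℂ) = -2 := by
      rw [← map_add, h, map_neg, map_ofNat]
    have hdiv : ∑ j, pderiv j (π 0 j) = 0 := by
      simp only [Fin.sum_univ_four, hdiag, h01, h02, h03, map_zero, map_add, pderiv_mul, pderiv_pow,
        pderiv_X, pderiv_C, Pi.single_apply, Fin.reduceEq, if_true, if_false]
      linear_combination X 2 * hC hbc₁ + X 3 * hC hbc₂ + X 1 * hC hbc₃
    fin_cases i
    · exact hdiv
    all_goals
      simp [Fin.sum_univ_four, hdiag, hskew 0, hskew 1 2, hskew 1 3, hskew 2 3, h12, h13, h23, hx₀]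
end
end
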